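/- Let k be a field, let (L, K, M) be a field correspondence over k, let Ω be an algebraically closed field extension of k of transcendence degree 1, and fix a k-algebra embedding PQ : M → Ω with restrictions P = PQ|_L and Q = PQ|_K. Let G_gen be the connected component of the edge PQ in the full generic graph, and let E_{G_gen} ⊆ Ω be the subfield generated by the images of all vertices and edges of G_gen. Then: (a) E_{G_gen} is Galois over P(L) and Galois over Q(K); and (b) for every subfield F of Ω containing PQ(M) such that F is Galois over P(L) and Galois over Q(K), one has E_{G_gen} ⊆ F. Hence E_{G_gen} is the minimal subfield of Ω containing PQ(M) that is Galois over both P(L) and Q(K). -/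

import Mathlib

/-!
Since `M` and `Ω` have transcendence degree one, `Ω` is algebraic, hence (being algebraically
closed) normal, over the image of every subfield of `M` over which `M` is algebraic, and any two
`k`-embeddings `M → Ω` differ by a `k`-automorphism of `Ω`. An automorphism fixing `P(L)` maps the
component `G_gen` to itself, so `E_{G_gen}` is normal over `P(L)`; it is separable over `P(L)`
because separability over the image of `L` or `K` propagates along the edges of `G_gen`.
Conversely, following a path from `PQ` to an edge `e` produces an automorphism `σ` with
`σ ∘ PQ = e` that maps `F` into itself, since at each step the correcting automorphism is
conjugate to one fixing `P(L)` or `Q(K)`; hence `e(M) = σ(PQ(M)) ⊆ F`.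
-/

/-- A field extension `F/k` has transcendence degree one iff some single element
forms a transcendence basis of `F` over `k`. -/
def HasTrdegOne (k F : Type*) [Field k] [Field F] [Algebra k F] : Prop :=
  ∃ x : F, IsTranscendenceBasis k (fun _ : Unit => x)

/-- For subfields `B ≤ E` of `Ω`, the extension `E/B` is Galois (normal and separable,
possibly infinite). -/
def IsGaloisOver {k Ω : Type*} [Field k] [Field Ω] [Algebra k Ω]
    (B E : IntermediateField k Ω) : Prop :=
  ∃ h : B ≤ E, IsGalois B (IntermediateField.extendScalars h)

section GenericGraph

variable {k M : Type*} [Field k] [Field M] [Algebra k M]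
  (L K : IntermediateField k M)
  {Ω : Type*} [Field Ω] [Algebra k Ω]

/-- Two edges (that is, `k`-algebra homomorphisms `M → Ω`) of the full generic graph are
incident to a common vertex: they have the same restriction to `L` (a common blue vertex)
or the same restriction to `K` (a common red vertex). -/
def EdgeStep (e e' : M →ₐ[k] Ω) : Prop :=
  e.comp L.val = e'.comp L.val ∨ e.comp K.val = e'.comp K.val

/-- The edge `e` lies in the connected component `G_gen` of the distinguished edge `PQ`
of the full generic graph. -/
def InGenericComponent (PQ e : M →ₐ[k] Ω) : Prop :=
  Relation.ReflTransGen (EdgeStep L K) PQ e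

/-- The subfield `E_{G_gen}` of `Ω` generated by the images of all vertices and edges of
the connected component `G_gen` of `PQ` (the image of each vertex is contained in the
image of any edge incident to it, so it is the compositum of the images `e(M)` over all
edges `e` of `G_gen`, together with the images of its vertices). -/
noncomputable def componentField (PQ : M →ₐ[k] Ω) : IntermediateField k Ω :=
  (⨆ e : {e : M →ₐ[k] Ω // InGenericComponent L K PQ e}, (e.1).fieldRange) ⊔
  (⨆ e : {e : M →ₐ[k] Ω // InGenericComponent L K PQ e}, ((e.1).comp L.val).fieldRange) ⊔
  (⨆ e : {e : M →ₐ[k] Ω // InGenericComponent L K PQ e}, ((e.1).comp K.val).fieldRange)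

end GenericGraph

open IntermediateField

section Transcendence

variable {k Ω : Type*} [Field k] [Field Ω] [Algebra k Ω]

theorem HasTrdegOne.exists_transcendental (h : HasTrdegOne k Ω) : ∃ t : Ω, Transcendental k t :=
  let ⟨t, ht⟩ := h
  ⟨t, ht.1.transcendental ()⟩

theorem IntermediateField.isAlgebraic_of_le {E F : IntermediateField k Ω} (hEF : E ≤ F)
    [Algebra.IsAlgebraic E Ω] : Algebra.IsAlgebraic F Ω :=
  letI : Algebra E F := (inclusion hEF).toAlgebra
  haveI : IsScalarTower E F Ω := .of_algebraMap_eq fun _ ↦ rfl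
  .extendScalars (inclusion_injective hEF)

theorem HasTrdegOne.isAlgebraic_of_transcendental_mem (hΩ : HasTrdegOne k Ω)
    {F : IntermediateField k Ω} {y : Ω} (hy : Transcendental k y) (hyF : y ∈ F) :
    Algebra.IsAlgebraic F Ω := by
  obtain ⟨x, hx⟩ := hΩ
  have hbasis : IsTranscendenceBasis k (fun _ : Unit ↦ y) :=
    (algebraicIndependent_unique_type_iff.mpr hy).isTranscendenceBasis_of_lift_trdeg_le_of_finite
      hx.lift_cardinalMk_eq_trdeg.symm.le
  have := hbasis.isAlgebraic_field
  refine isAlgebraic_of_le (E := adjoin k (Set.range fun _ : Unit ↦ y)) (adjoin_le_iff.mpr ?_)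
  rintro _ ⟨_, rfl⟩
  exact hyF

theorem HasTrdegOne.isAlgebraic_fieldRange (hΩ : HasTrdegOne k Ω) {A : Type*} [Field A]
    [Algebra k A] (f : A →ₐ[k] Ω) {a : A} (ha : Transcendental k a) :
    Algebra.IsAlgebraic f.fieldRange Ω :=
  hΩ.isAlgebraic_of_transcendental_mem (mt (isAlgebraic_algHom_iff f f.injective).mp ha) ⟨a, rfl⟩

theorem Transcendental.exists_transcendental_of_isAlgebraic {M : Type*} [Field M] [Algebra k M]
    (N : Type*) [Field N] [Algebra k N] [Algebra N M] [IsScalarTower k N M]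
    [Algebra.IsAlgebraic N M] {t : M} (ht : Transcendental k t) : ∃ n : N, Transcendental k n := by
  by_contra! hN
  have : Algebra.IsAlgebraic k N := ⟨fun n ↦ not_not.mp (hN n)⟩
  exact ht ((Algebra.IsAlgebraic.trans k N M).isAlgebraic t)

end Transcendence

section AlgClosed

variable {k Ω : Type*} [Field k] [Field Ω] [Algebra k Ω] [IsAlgClosed Ω]

theorem HasTrdegOne.normal_fieldRange_comp (hΩ : HasTrdegOne k Ω) {M : Type*} [Field M]
    [Algebra k M] {t : M} (ht : Transcendental k t) (N : IntermediateField k M)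
    [Algebra.IsAlgebraic N M] (e : M →ₐ[k] Ω) : Normal (e.comp N.val).fieldRange Ω :=
  let ⟨_, hn⟩ := ht.exists_transcendental_of_isAlgebraic N
  haveI := hΩ.isAlgebraic_fieldRange (e.comp N.val) hn
  haveI : IsAlgClosure (e.comp N.val).fieldRange Ω := ⟨inferInstance, inferInstance⟩
  IsAlgClosure.normal _ _

theorem exists_algEquiv_comp_eq {A : Type*} [Field A] [Algebra k A] (f g : A →ₐ[k] Ω)
    (hf : Algebra.IsAlgebraic f.fieldRange Ω) (hg : Algebra.IsAlgebraic g.fieldRange Ω) :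
    ∃ ρ : Ω ≃ₐ[k] Ω, (ρ : Ω →ₐ[k] Ω).comp f = g := by
  have : IsAlgClosure f.fieldRange Ω := ⟨inferInstance, hf⟩
  have : IsAlgClosure g.fieldRange Ω := ⟨inferInstance, hg⟩
  let φ : f.fieldRange ≃+* g.fieldRange := f.equivFieldRange.symm.trans g.equivFieldRange
  let ρ := IsAlgClosure.equivOfEquiv Ω Ω φ
  have hρ (a : A) : ρ (f a) = g a := by
    simpa [φ] using IsAlgClosure.equivOfEquiv_algebraMap Ω Ω φ (f.equivFieldRange a)
  refine ⟨AlgEquiv.ofRingEquiv (f := ρ) fun c ↦ ?_, AlgHom.ext hρ⟩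
  simpa using hρ (algebraMap k A c)

end AlgClosed

section Galois

variable {k Ω : Type*} [Field k] [Field Ω] [Algebra k Ω]

theorem IntermediateField.map_le_of_normal {B F : IntermediateField k Ω} (hBF : B ≤ F)
    [Normal B Ω] [Normal B (extendScalars hBF)] (σ : Ω →ₐ[k] Ω) (hσ : ∀ x ∈ B, σ x = x) :
    F.map σ ≤ F := by
  let τ : Ω →ₐ[B] Ω := { σ with commutes' := fun b ↦ hσ b b.2 }
  rintro _ ⟨y, hy, rfl⟩
  exact normal_iff_forall_map_le.mp ‹_› τ ⟨y, hy, rfl⟩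

theorem IsSeparable.of_comp_eq {A B C : Type*} [Field A] [Field B] [Field C] [Algebra A B]
    [Algebra C Ω] (f : A →+* C) (g : B →+* Ω)
    (h : (algebraMap C Ω).comp f = g.comp (algebraMap A B)) {b : B} (hb : IsSeparable A b) :
    IsSeparable C (g b) := by
  refine (Polynomial.Separable.map (f := f) hb).of_dvd (minpoly.dvd C (g b) ?_)
  rw [← Polynomial.map_aeval_eq_aeval_map h, minpoly.aeval, map_zero]

theorem AlgHom.apply_mem_separableClosure {M F : Type*} [Field M] [Algebra k M] [Field F]
    [Algebra F Ω] {N : IntermediateField k M} [Algebra.IsSeparable N M] (e : M →ₐ[k] Ω)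
    (hN : ∀ n : N, e n ∈ separableClosure F Ω) (m : M) : e m ∈ separableClosure F Ω := by
  have hsep : IsSeparable (separableClosure F Ω) (e m) :=
    .of_comp_eq (RingHom.codRestrict (e.comp N.val).toRingHom (separableClosure F Ω) hN)
      e.toRingHom (RingHom.ext fun _ ↦ rfl) (Algebra.IsSeparable.isSeparable N m)
  exact mem_separableClosure_iff.mpr (hsep.of_algebra_isSeparable_of_isSeparable F)

end Galois

section GenericGraph

variable {k M Ω : Type*} [Field k] [Field M] [Algebra k M] [Field Ω] [Algebra k Ω]
  (L K : IntermediateField k M)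

theorem edgeStep_comm : EdgeStep (Ω := Ω) K L = EdgeStep L K := by
  funext e e'
  exact propext or_comm

theorem componentField_comm (PQ : M →ₐ[k] Ω) :
    componentField K L PQ = componentField L K PQ := by
  have : InGenericComponent (Ω := Ω) K L = InGenericComponent L K := by
    funext PQ e
    rw [InGenericComponent, InGenericComponent, edgeStep_comm]
  rw [componentField, componentField, this, sup_right_comm]

variable {L K} {PQ e : M →ₐ[k] Ω}

theorem InGenericComponent.fieldRange_le (he : InGenericComponent L K PQ e) :
    e.fieldRange ≤ componentField L K PQ :=
  le_sup_of_le_left <| le_sup_of_le_left <| le_iSup_of_le ⟨e, he⟩ le_rfl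

theorem componentField_le_iff {F : IntermediateField k Ω} :
    componentField L K PQ ≤ F ↔ ∀ e, InGenericComponent L K PQ e → e.fieldRange ≤ F := by
  refine ⟨fun h e he ↦ he.fieldRange_le.trans h, fun h ↦ ?_⟩
  have hvertex (e : {e // InGenericComponent L K PQ e}) (N : IntermediateField k M) :
      (e.1.comp N.val).fieldRange ≤ F := by
    rintro _ ⟨n, rfl⟩
    exact h e.1 e.2 ⟨n, rfl⟩
  exact sup_le (sup_le (iSup_le fun e ↦ h e.1 e.2) (iSup_le (hvertex · L)))
    (iSup_le (hvertex · K))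

theorem InGenericComponent.algHom_comp (σ : Ω →ₐ[k] Ω)
    (hσ : ∀ x ∈ (PQ.comp L.val).fieldRange, σ x = x) (he : InGenericComponent L K PQ e) :
    InGenericComponent L K PQ (σ.comp e) := by
  have hPQ : EdgeStep L K PQ (σ.comp PQ) := Or.inl <| AlgHom.ext fun l ↦ (hσ _ ⟨l, rfl⟩).symm
  refine .head hPQ (he.lift (σ.comp ·) fun a b hab ↦ ?_)
  rcases hab with h | h
  · exact Or.inl (by rw [AlgHom.comp_assoc, AlgHom.comp_assoc, h])
  · exact Or.inr (by rw [AlgHom.comp_assoc, AlgHom.comp_assoc, h])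

theorem map_componentField_le (σ : Ω →ₐ[k] Ω)
    (hσ : ∀ x ∈ (PQ.comp L.val).fieldRange, σ x = x) :
    (componentField L K PQ).map σ ≤ componentField L K PQ := by
  refine map_le_iff_le_comap.mpr (componentField_le_iff.mpr fun e he ↦ ?_)
  rintro _ ⟨m, rfl⟩
  exact (he.algHom_comp σ hσ).fieldRange_le ⟨m, rfl⟩

theorem InGenericComponent.apply_mem_separableClosure [Algebra.IsSeparable L M]
    [Algebra.IsSeparable K M] (he : InGenericComponent L K PQ e) (m : M) :
    e m ∈ separableClosure (PQ.comp L.val).fieldRange Ω := by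
  induction he generalizing m with
  | refl =>
    refine PQ.apply_mem_separableClosure (N := L) (fun l ↦ ?_) m
    exact (separableClosure (PQ.comp L.val).fieldRange Ω).algebraMap_mem
      (⟨PQ l, l, rfl⟩ : (PQ.comp L.val).fieldRange)
  | tail _ hstep ih =>
    rcases hstep with h | h
    · exact AlgHom.apply_mem_separableClosure (N := L) _ (fun l ↦ DFunLike.congr_fun h l ▸ ih l) m
    · exact AlgHom.apply_mem_separableClosure (N := K) _ (fun l ↦ DFunLike.congr_fun h l ▸ ih l) m

variable (L K) in
theorem isGaloisOver_componentField [IsAlgClosed Ω] [Algebra.IsSeparable L M]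
    [Algebra.IsSeparable K M] (htr : HasTrdegOne k M) (hΩ : HasTrdegOne k Ω) (PQ : M →ₐ[k] Ω) :
    IsGaloisOver (PQ.comp L.val).fieldRange (componentField L K PQ) := by
  obtain ⟨t, ht⟩ := htr.exists_transcendental
  have := hΩ.normal_fieldRange_comp ht L PQ
  have hB : (PQ.comp L.val).fieldRange ≤ componentField L K PQ := by
    rintro _ ⟨l, rfl⟩
    exact InGenericComponent.fieldRange_le .refl ⟨l, rfl⟩
  refine ⟨hB, isGalois_iff.mpr ⟨(le_separableClosure_iff _ Ω _).mp ?_, ?_⟩⟩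
  · intro x hx
    refine (componentField_le_iff (F := (separableClosure _ Ω).restrictScalars k)).mpr ?_ hx
    rintro e he _ ⟨m, rfl⟩
    exact he.apply_mem_separableClosure m
  · refine normal_iff_forall_map_le.mpr fun σ ↦ ?_
    rintro _ ⟨y, hy, rfl⟩
    exact map_componentField_le (σ.restrictScalars k) (fun x hx ↦ σ.commutes ⟨x, hx⟩)
      ⟨y, hy, rfl⟩

end GenericGraph

section Minimality

variable {k M Ω : Type*} [Field k] [Field M] [Algebra k M] [Field Ω] [Algebra k Ω]
  [IsAlgClosed Ω] {t : M} {F : IntermediateField k Ω}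

theorem exists_algEquiv_comp_eq_of_isGaloisOver (hΩ : HasTrdegOne k Ω) (ht : Transcendental k t)
    (N : IntermediateField k M) [Algebra.IsAlgebraic N M] {PQ e : M →ₐ[k] Ω}
    (hF : IsGaloisOver (PQ.comp N.val).fieldRange F) {σ : Ω ≃ₐ[k] Ω}
    (hσ : (σ : Ω →ₐ[k] Ω).comp PQ = e) (hσF : F.map (σ : Ω →ₐ[k] Ω) ≤ F) {e' : M →ₐ[k] Ω}
    (hee' : e.comp N.val = e'.comp N.val) :
    ∃ σ' : Ω ≃ₐ[k] Ω, (σ' : Ω →ₐ[k] Ω).comp PQ = e' ∧ F.map (σ' : Ω →ₐ[k] Ω) ≤ F := by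
  obtain ⟨hBF, hGal⟩ := hF
  have := hΩ.normal_fieldRange_comp ht N PQ
  obtain ⟨ρ, hρ⟩ := exists_algEquiv_comp_eq e e' (hΩ.isAlgebraic_fieldRange e ht)
    (hΩ.isAlgebraic_fieldRange e' ht)
  have hρσ : ((σ.trans ρ : Ω ≃ₐ[k] Ω) : Ω →ₐ[k] Ω).comp PQ = e' := by
    rw [← hρ, ← hσ]
    rfl
  -- `σ⁻¹ρσ` fixes `PQ(N)`, so it stabilises `F` by normality of `F` over `PQ(N)`.
  have hτ : F.map ((σ.trans (ρ.trans σ.symm) : Ω ≃ₐ[k] Ω) : Ω →ₐ[k] Ω) ≤ F := by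
    refine map_le_of_normal hBF _ ?_
    rintro _ ⟨n, rfl⟩
    have hσn : σ (PQ n) = e n := DFunLike.congr_fun hσ (n : M)
    have hρn : ρ (e n) = e n :=
      (DFunLike.congr_fun hρ (n : M)).trans (DFunLike.congr_fun hee' n).symm
    change σ.symm (ρ (σ (PQ n))) = PQ n
    rw [hσn, hρn, ← hσn, AlgEquiv.symm_apply_apply]
  refine ⟨σ.trans ρ, hρσ, ?_⟩
  calc F.map ((σ.trans ρ : Ω ≃ₐ[k] Ω) : Ω →ₐ[k] Ω)
      = (F.map ((σ.trans (ρ.trans σ.symm) : Ω ≃ₐ[k] Ω) : Ω →ₐ[k] Ω)).map (σ : Ω →ₐ[k] Ω) := by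
        rw [map_map]
        exact congrArg (F.map ·) (AlgHom.ext fun x ↦ by simp)
    _ ≤ F.map (σ : Ω →ₐ[k] Ω) := map_mono _ hτ
    _ ≤ F := hσF

variable {L K : IntermediateField k M} [Algebra.IsAlgebraic L M] [Algebra.IsAlgebraic K M]
  {PQ e : M →ₐ[k] Ω}

theorem InGenericComponent.exists_algEquiv_comp_eq (hΩ : HasTrdegOne k Ω)
    (ht : Transcendental k t) (hL : IsGaloisOver (PQ.comp L.val).fieldRange F)
    (hK : IsGaloisOver (PQ.comp K.val).fieldRange F) (he : InGenericComponent L K PQ e) :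
    ∃ σ : Ω ≃ₐ[k] Ω, (σ : Ω →ₐ[k] Ω).comp PQ = e ∧ F.map (σ : Ω →ₐ[k] Ω) ≤ F := by
  induction he with
  | refl =>
    refine ⟨.refl, AlgHom.ext fun _ ↦ rfl, ?_⟩
    rintro _ ⟨x, hx, rfl⟩
    exact hx
  | tail _ hstep ih =>
    obtain ⟨σ, hσ, hσF⟩ := ih
    rcases hstep with h | h
    · exact exists_algEquiv_comp_eq_of_isGaloisOver hΩ ht L hL hσ hσF h
    · exact exists_algEquiv_comp_eq_of_isGaloisOver hΩ ht K hK hσ hσF h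

theorem componentField_le_of_isGaloisOver (htr : HasTrdegOne k M) (hΩ : HasTrdegOne k Ω)
    (hF : PQ.fieldRange ≤ F) (hL : IsGaloisOver (PQ.comp L.val).fieldRange F)
    (hK : IsGaloisOver (PQ.comp K.val).fieldRange F) : componentField L K PQ ≤ F := by
  obtain ⟨t, ht⟩ := htr.exists_transcendental
  refine componentField_le_iff.mpr fun e he ↦ ?_
  obtain ⟨σ, rfl, hσF⟩ := he.exists_algEquiv_comp_eq hΩ ht hL hK
  rw [← AlgHom.map_fieldRange]
  exact (map_mono _ hF).trans hσF

end Minimality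

theorem componentField_minimal_biGalois
    (k M : Type*) [Field k] [Field M] [Algebra k M]
    -- `M` is a finitely generated field extension of `k` of transcendence degree 1
    (htr : HasTrdegOne k M)
    -- the two intermediate fields `L` and `K`, with `M/L` and `M/K` finite and separable
    (L K : IntermediateField k M)
    [Algebra.IsSeparable L M] [Algebra.IsSeparable K M]
    -- an algebraically closed extension `Ω` of `k` of transcendence degree 1
    (Ω : Type*) [Field Ω] [Algebra k Ω] [IsAlgClosed Ω]
    (htrΩ : HasTrdegOne k Ω)
    -- a fixed `k`-algebra embedding `PQ : M → Ω`
    (PQ : M →ₐ[k] Ω) :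
    IsGaloisOver (PQ.comp L.val).fieldRange (componentField L K PQ) ∧
    IsGaloisOver (PQ.comp K.val).fieldRange (componentField L K PQ) ∧
    ∀ F : IntermediateField k Ω, PQ.fieldRange ≤ F →
      IsGaloisOver (PQ.comp L.val).fieldRange F →
      IsGaloisOver (PQ.comp K.val).fieldRange F →
      componentField L K PQ ≤ F := by
  refine ⟨isGaloisOver_componentField L K htr htrΩ PQ, ?_,
    fun F hF hL hK ↦ componentField_le_of_isGaloisOver htr htrΩ hF hL hK⟩
  rw [← componentField_comm]
  exact isGaloisOver_componentField K L htr htrΩ PQ
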